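/- Let M be a finite matroid with rank function r. A set C ⊆ E(M) is a circuit of M if and only if C is minimal with respect to inclusion among the sets D ⊆ E(M) for which there exists a cyclic flat X of M with D ⊆ X and |D| = r(X) + 1. -/

import Mathlib

namespace Matroid

variable {α β : Type*}

/-- A circuit of a matroid: a minimal dependent set. -/
def IsCircuit' (M : Matroid α) (C : Set α) : Prop :=
  M.Dep C ∧ ∀ D, D ⊂ C → M.Indep D

/-- A cyclic flat: a flat that is a (possibly empty) union of circuits. -/
def CyclicFlat (M : Matroid α) (X : Set α) : Prop :=
  M.IsFlat X ∧ ∀ e ∈ X, ∃ C, M.IsCircuit' C ∧ C ⊆ X ∧ e ∈ C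

/-- The rank of a set: the maximum size of an independent subset. -/
noncomputable def rk (M : Matroid α) (X : Set α) : ℕ :=
  sSup {n | ∃ I, M.Indep I ∧ I ⊆ X ∧ I.ncard = n}

/-- Deletion of a set from a matroid. -/
def del (M : Matroid α) (D : Set α) : Matroid α := M ↾ (M.E \ D)

/-- Contraction of a set in a matroid. -/
def con (M : Matroid α) (C : Set α) : Matroid α := (M✶ ↾ (M.E \ C))✶

/-- `N` is a minor of `M` if it is obtained from `M` by a contraction and a deletion. -/
def IsMinorOf (N M : Matroid α) : Prop := ∃ C D, N = (M.con C).del D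

/-- Matroid isomorphism: a bijection of ground sets preserving independence. -/
def IsIsoTo (M : Matroid α) (N : Matroid β) : Prop :=
  ∃ e : M.E ≃ N.E, ∀ I : Set M.E,
    M.Indep (Subtype.val '' I) ↔ N.Indep (Subtype.val '' (e '' I))

end Matroid

/-! Sets `D` inside a cyclic flat `X` with `|D| = r(X) + 1` are dependent, since `D` exceeds the
rank of `X`. Conversely a circuit `C` is such a set for `X = cl(C)`: removing one element of `C`
leaves a basis of `cl(C)`, and `cl(C)` is cyclic because every `e ∈ cl(C) \ C` lies in a circuit
inside `C ∪ {e}`. So the minimal such sets are the minimal dependent sets. -/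

namespace Matroid

variable {α : Type*} {M : Matroid α} {C D I X : Set α}

lemma isCircuit'_iff : M.IsCircuit' C ↔ M.IsCircuit C :=
  isCircuit_iff_forall_ssubset.symm

lemma cyclicFlat_iff :
    M.CyclicFlat X ↔ M.IsFlat X ∧ ∀ e ∈ X, ∃ C, M.IsCircuit C ∧ C ⊆ X ∧ e ∈ C := by
  simp only [CyclicFlat, isCircuit'_iff]

lemma Indep.ncard_le_ncard_of_isBasis' [M.RankFinite] (hI : M.Indep I) (hIX : I ⊆ X)
    {J : Set α} (hJ : M.IsBasis' J X) : I.ncard ≤ J.ncard := by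
  have hle : I.encard ≤ J.encard := hJ.encard_eq_eRk ▸ hI.encard_le_eRk_of_subset hIX
  rwa [← hI.finite.cast_ncard_eq, ← hJ.indep.finite.cast_ncard_eq, Nat.cast_le] at hle

lemma IsBasis'.rk_eq_ncard [M.RankFinite] (hI : M.IsBasis' I X) : M.rk X = I.ncard :=
  IsGreatest.csSup_eq ⟨⟨I, hI.indep, hI.subset, rfl⟩,
    by rintro _ ⟨J, hJ, hJX, rfl⟩; exact hJ.ncard_le_ncard_of_isBasis' hJX hI⟩

lemma Indep.ncard_le_rk [M.RankFinite] (hI : M.Indep I) (hIX : I ⊆ X) : I.ncard ≤ M.rk X := by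
  obtain ⟨J, hJ⟩ := M.exists_isBasis' X
  exact hJ.rk_eq_ncard ▸ hI.ncard_le_ncard_of_isBasis' hIX hJ

lemma not_indep_of_rk_lt_ncard [M.RankFinite] (hDX : D ⊆ X) (hlt : M.rk X < D.ncard) :
    ¬ M.Indep D :=
  fun hD ↦ (hD.ncard_le_rk hDX).not_gt hlt

lemma IsCircuit.ncard_eq_rk_closure_add_one [M.RankFinite] (hC : M.IsCircuit C) :
    C.ncard = M.rk (M.closure C) + 1 := by
  obtain ⟨e, he⟩ := hC.nonempty
  have hbasis : M.IsBasis (C \ {e}) (M.closure C) := by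
    simpa only [hC.closure_sdiff_singleton_eq] using (hC.sdiff_singleton_indep he).isBasis_closure
  rw [hbasis.isBasis'.rk_eq_ncard, Set.ncard_sdiff_singleton_add_one he hC.finite]

lemma cyclicFlat_closure (hX : ∀ e ∈ X, ∃ C, M.IsCircuit C ∧ C ⊆ X ∧ e ∈ C) :
    M.CyclicFlat (M.closure X) := by
  have hXcl : X ⊆ M.closure X := M.subset_closure X fun e he ↦
    let ⟨_, hC, _, heC⟩ := hX e he; hC.subset_ground heC
  refine cyclicFlat_iff.2 ⟨M.isFlat_closure X, fun e he ↦ ?_⟩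
  by_cases heX : e ∈ X
  · obtain ⟨C, hC, hCX, heC⟩ := hX e heX
    exact ⟨C, hC, hCX.trans hXcl, heC⟩
  · obtain ⟨C, hCX, hC, heC⟩ := exists_isCircuit_of_mem_closure he heX
    exact ⟨C, hC, hCX.trans (Set.insert_subset he hXcl), heC⟩

lemma IsCircuit.cyclicFlat_closure (hC : M.IsCircuit C) : M.CyclicFlat (M.closure C) :=
  Matroid.cyclicFlat_closure fun _ he ↦ ⟨C, hC, subset_rfl, he⟩

lemma IsCircuit.exists_cyclicFlat_ncard_eq_rk_add_one [M.RankFinite] (hC : M.IsCircuit C) :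
    ∃ X, M.CyclicFlat X ∧ C ⊆ X ∧ C.ncard = M.rk X + 1 :=
  ⟨M.closure C, hC.cyclicFlat_closure, M.subset_closure C hC.subset_ground,
    hC.ncard_eq_rk_closure_add_one⟩

lemma dep_of_subset_of_ncard_eq_rk_add_one [M.RankFinite] (hXE : X ⊆ M.E) (hDX : D ⊆ X)
    (hD : D.ncard = M.rk X + 1) : M.Dep D :=
  dep_iff.2 ⟨not_indep_of_rk_lt_ncard hDX (by omega), hDX.trans hXE⟩

end Matroid

theorem isCircuit_iff_minimal_general {α : Type*} (M : Matroid α) [M.Finite]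
    (C : Set α) :
    M.IsCircuit' C ↔
      ((∃ X : Set α, M.CyclicFlat X ∧ C ⊆ X ∧ C.ncard = M.rk X + 1) ∧
        ∀ D ⊆ M.E, (∃ X : Set α, M.CyclicFlat X ∧ D ⊆ X ∧ D.ncard = M.rk X + 1) →
          D ⊆ C → D = C) := by
  rw [Matroid.isCircuit'_iff]
  refine ⟨fun hC ↦ ⟨hC.exists_cyclicFlat_ncard_eq_rk_add_one, ?_⟩, ?_⟩
  · rintro D - ⟨X, hX, hDX, hD⟩ hDC
    exact hC.eq_of_dep_subset
      (M.dep_of_subset_of_ncard_eq_rk_add_one hX.1.subset_ground hDX hD) hDC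
  · rintro ⟨⟨X, hX, hCX, hC⟩, hmin⟩
    have hCdep := M.dep_of_subset_of_ncard_eq_rk_add_one hX.1.subset_ground hCX hC
    obtain ⟨C', hC'C, hC'⟩ := hCdep.exists_isCircuit_subset
    obtain rfl := hmin C' hC'.subset_ground hC'.exists_cyclicFlat_ncard_eq_rk_add_one hC'C
    exact hC'

/-- A set `C ⊆ E(M)` is a circuit of a finite matroid `M` iff `C` is minimal with respect to
inclusion among the sets `D ⊆ E(M)` for which there is a cyclic flat `X` with `D ⊆ X` and
`|D| = r X + 1`. -/
theorem isCircuit_iff_minimal {α : Type*} (M : Matroid α) [M.Finite]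
    (C : Set α) (hC : C ⊆ M.E) :
    M.IsCircuit' C ↔
      ((∃ X : Set α, M.CyclicFlat X ∧ C ⊆ X ∧ C.ncard = M.rk X + 1) ∧
        ∀ D ⊆ M.E, (∃ X : Set α, M.CyclicFlat X ∧ D ⊆ X ∧ D.ncard = M.rk X + 1) →
          D ⊆ C → D = C) :=
  isCircuit_iff_minimal_general M C
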